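/- arXiv:1503.00199 — 2 statements merged into one kernel-verified Lean document; each statement's English description precedes it below -/
import Mathlib

section
/- For every prime p, ord_p(F̄_p) = p − 1, where F̄_n is the reciprocal Farey product, the reciprocal of the product of all fractions h/k with 1 ≤ h ≤ k ≤ n and gcd(h,k)=1. -/
open Finset

/-- The Farey product: product of all reduced fractions h/k with 1 ≤ h ≤ k ≤ n, gcd(h,k)=1. -/
def fareyProd (n : ℕ) : ℚ :=
  ∏ k ∈ Finset.Icc 1 n, ∏ h ∈ (Finset.Icc 1 k).filter (fun h => Nat.gcd h k = 1), (h : ℚ) / k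

/-- The reciprocal Farey product F̄_n. -/
def recipFareyProd (n : ℕ) : ℚ := (fareyProd n)⁻¹

lemma padicValRat_prod {p : ℕ} [hp : Fact p.Prime] {ι : Type*} (s : Finset ι) (f : ι → ℚ)
    (hf : ∀ i ∈ s, f i ≠ 0) :
    padicValRat p (∏ i ∈ s, f i) = ∑ i ∈ s, padicValRat p (f i) := by
  classical
  induction s using Finset.induction_on with
  | empty => simp
  | @insert a s ha ih =>
    rw [Finset.prod_insert ha, Finset.sum_insert ha,
      padicValRat.mul (hf a (Finset.mem_insert_self a s))
        (Finset.prod_ne_zero_iff.mpr fun i hi => hf i (Finset.mem_insert_of_mem hi)),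
      ih fun i hi => hf i (Finset.mem_insert_of_mem hi)]

lemma val_zero_of_lt {p : ℕ} (hp : p.Prime) {m : ℕ} (h0 : 0 < m) (hlt : m < p) :
    padicValRat p (m : ℚ) = 0 := by
  rw [padicValRat.of_nat]
  norm_cast
  exact padicValNat.eq_zero_of_not_dvd (Nat.not_dvd_of_pos_of_lt h0 hlt)

theorem ord_recipFareyProd_at_p (p : ℕ) (hp : p.Prime) :
    padicValRat p (recipFareyProd p) = (p : ℤ) - 1 := by
  haveI : Fact p.Prime := ⟨hp⟩
  have hp1 : 1 < p := hp.one_lt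
  have hne : ∀ k ∈ Finset.Icc 1 p, ∀ h ∈ (Finset.Icc 1 k).filter (fun h => Nat.gcd h k = 1),
      ((h : ℚ) / k) ≠ 0 := by
    intro k hk h hh
    simp only [Finset.mem_filter, Finset.mem_Icc] at hh hk
    have : (0:ℚ) < h := by exact_mod_cast hh.1.1
    have : (0:ℚ) < k := by exact_mod_cast hk.1
    positivity
  have key : padicValRat p (fareyProd p)
      = ∑ k ∈ Finset.Icc 1 p, ∑ h ∈ (Finset.Icc 1 k).filter (fun h => Nat.gcd h k = 1),
          padicValRat p ((h : ℚ) / k) := by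
    rw [fareyProd, padicValRat_prod _ _ (fun k hk =>
      Finset.prod_ne_zero_iff.mpr fun h hh => hne k hk h hh)]
    exact Finset.sum_congr rfl fun k hk => padicValRat_prod _ _ (hne k hk)
  -- inner sums vanish for k < p
  have hzero : ∀ k ∈ Finset.Icc 1 p, k ≠ p →
      (∑ h ∈ (Finset.Icc 1 k).filter (fun h => Nat.gcd h k = 1),
          padicValRat p ((h : ℚ) / k)) = 0 := by
    intro k hk hkp
    simp only [Finset.mem_Icc] at hk
    have hklt : k < p := lt_of_le_of_ne hk.2 hkp
    apply Finset.sum_eq_zero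
    intro h hh
    simp only [Finset.mem_filter, Finset.mem_Icc] at hh
    have hk0 : (k:ℚ) ≠ 0 := Nat.cast_ne_zero.mpr (by omega)
    have hh0 : (h:ℚ) ≠ 0 := Nat.cast_ne_zero.mpr (by omega)
    rw [padicValRat.div hh0 hk0,
      val_zero_of_lt hp hh.1.1 (lt_of_le_of_lt hh.1.2 hklt),
      val_zero_of_lt hp hk.1 hklt, sub_zero]
  -- the k = p term
  have hfilter : (Finset.Icc 1 p).filter (fun h => Nat.gcd h p = 1) = Finset.Ico 1 p := by
    ext h
    simp only [Finset.mem_filter, Finset.mem_Icc, Finset.mem_Ico]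
    constructor
    · rintro ⟨⟨h1, h2⟩, hg⟩
      refine ⟨h1, lt_of_le_of_ne h2 fun he => ?_⟩
      subst he
      rw [Nat.gcd_self] at hg
      omega
    · rintro ⟨h1, h2⟩
      refine ⟨⟨h1, le_of_lt h2⟩, Nat.Coprime.gcd_eq_one ?_⟩
      exact (Nat.coprime_comm.mp (hp.coprime_iff_not_dvd.mpr (Nat.not_dvd_of_pos_of_lt (by omega) h2)))
  have hpterm : (∑ h ∈ (Finset.Icc 1 p).filter (fun h => Nat.gcd h p = 1),
      padicValRat p ((h : ℚ) / p)) = -((p:ℤ) - 1) := by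
    rw [hfilter]
    have : ∀ h ∈ Finset.Ico 1 p, padicValRat p ((h : ℚ) / p) = -1 := by
      intro h hh
      simp only [Finset.mem_Ico] at hh
      have hh0 : (h:ℚ) ≠ 0 := by
        have : 0 < h := hh.1
        positivity
      have hp0 : (p:ℚ) ≠ 0 := by positivity
      rw [padicValRat.div hh0 hp0, val_zero_of_lt hp hh.1 hh.2,
        padicValRat.self hp1]
      ring
    rw [Finset.sum_congr rfl this, Finset.sum_const, Nat.card_Ico]
    push_cast [Nat.cast_sub (le_of_lt hp1)]
    ring_nf
    omega
  have hmem : p ∈ Finset.Icc 1 p := Finset.mem_Icc.mpr ⟨le_of_lt hp1, le_refl p⟩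
  rw [recipFareyProd, padicValRat.inv, key,
    Finset.sum_eq_single_of_mem p hmem (fun k hk hkp => hzero k hk hkp), hpterm, neg_neg]
end

section
/- For every prime p, the function n ↦ ord_p(F̄_n) takes both a positive and a negative value (i.e., there exist n, m with ord_p(F̄_n) > 0 and ord_p(F̄_m) < 0). -/
open Finset

def fareyTerm (p k : ℕ) : ℤ :=
  ∑ h ∈ (Finset.Icc 1 k).filter (fun h => Nat.gcd h k = 1),
    ((padicValNat p h : ℤ) - padicValNat p k)

lemma padicValRat_finset_prod {p : ℕ} [Fact p.Prime] {ι : Type*} (s : Finset ι) (f : ι → ℚ)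
    (hf : ∀ i ∈ s, f i ≠ 0) :
    padicValRat p (∏ i ∈ s, f i) = ∑ i ∈ s, padicValRat p (f i) := by
  induction s using Finset.cons_induction with
  | empty => simp
  | cons a s ha ih =>
    rw [Finset.prod_cons, Finset.sum_cons,
      padicValRat.mul (hf a (Finset.mem_cons_self a s))
        (Finset.prod_ne_zero_iff.2 fun i hi => hf i (Finset.mem_cons_of_mem hi)),
      ih fun i hi => hf i (Finset.mem_cons_of_mem hi)]

lemma farey_val {p : ℕ} (hp : p.Prime) (n : ℕ) :
    padicValRat p (fareyProd n) = ∑ k ∈ Finset.Icc 1 n, fareyTerm p k := by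
  haveI : Fact p.Prime := ⟨hp⟩
  rw [fareyProd, padicValRat_finset_prod]
  · refine Finset.sum_congr rfl fun k hk => ?_
    have hk1 : (1:ℕ) ≤ k := (Finset.mem_Icc.1 hk).1
    rw [padicValRat_finset_prod]
    · refine Finset.sum_congr rfl fun h hh => ?_
      have hh1 : (1:ℕ) ≤ h := (Finset.mem_Icc.1 (Finset.mem_filter.1 hh).1).1
      rw [padicValRat.div (by exact_mod_cast Nat.one_le_iff_ne_zero.1 hh1)
        (by exact_mod_cast Nat.one_le_iff_ne_zero.1 hk1), ← padicValRat_of_nat,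
        ← padicValRat_of_nat]
    · intro h hh
      have hh1 : (1:ℕ) ≤ h := (Finset.mem_Icc.1 (Finset.mem_filter.1 hh).1).1
      exact div_ne_zero (by exact_mod_cast Nat.one_le_iff_ne_zero.1 hh1)
        (by exact_mod_cast Nat.one_le_iff_ne_zero.1 hk1)
  · intro k hk
    have hk1 : (1:ℕ) ≤ k := (Finset.mem_Icc.1 hk).1
    refine Finset.prod_ne_zero_iff.2 fun h hh => ?_
    have hh1 : (1:ℕ) ≤ h := (Finset.mem_Icc.1 (Finset.mem_filter.1 hh).1).1
    exact div_ne_zero (by exact_mod_cast Nat.one_le_iff_ne_zero.1 hh1)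
      (by exact_mod_cast Nat.one_le_iff_ne_zero.1 hk1)

lemma cardA (k : ℕ) :
    ((Finset.Icc 1 k).filter (fun h => Nat.gcd h k = 1)).card = Nat.totient k := by
  rw [← Nat.filter_coprime_Ico_eq_totient k 1]
  congr 1
  have h1 : Finset.Ico 1 (1 + k) = Finset.Icc 1 k := by rw [Nat.add_comm, Finset.Ico_add_one_right_eq_Icc]
  rw [h1]
  exact Finset.filter_congr fun x _ => by simp [Nat.Coprime, Nat.gcd_comm]

lemma hmult {p : ℕ} {k : ℕ} (h0 : 0 < k) (hlt : k < 3 * p) (hd : p ∣ k) :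
    k = p ∨ k = 2 * p := by
  obtain ⟨m, rfl⟩ := hd
  have hm3 : m < 3 := by
    by_contra h
    push_neg at h
    have h2 : p * 3 ≤ p * m := Nat.mul_le_mul_left p h
    rw [Nat.mul_comm 3 p] at hlt
    exact absurd (lt_of_le_of_lt h2 hlt) (lt_irrefl _)
  interval_cases m
  · simp at h0
  · left; ring
  · right; ring

lemma sum_ite_odd (a t : ℕ) :
    ∑ k ∈ Finset.Ioc a (a + 2 * t), (if k % 2 = 1 then (1:ℤ) else 0) = t := by
  induction t with
  | zero => simp
  | succ t ih =>
    have he : a + 2 * (t + 1) = (a + 2 * t) + 2 := by ring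
    rw [he, ← Finset.sum_Ioc_consecutive _ (by omega : a ≤ a + 2 * t) (by omega), ih]
    have hs : Finset.Ioc (a + 2 * t) (a + 2 * t + 2) = {a + 2 * t + 1, a + 2 * t + 2} := by
      ext x; simp [Finset.mem_Ioc]; omega
    rw [hs, Finset.sum_insert (by simp), Finset.sum_singleton]
    by_cases h : (a + 2 * t) % 2 = 0
    · rw [if_pos (by omega), if_neg (by omega)]
      push_cast; ring
    · rw [if_neg (by omega), if_pos (by omega)]
      push_cast; ring

lemma v_not_dvd {p m : ℕ} (h : ¬ p ∣ m) : padicValNat p m = 0 :=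
  padicValNat.eq_zero_of_not_dvd h

lemma not_dvd_of_lt {p m : ℕ} (h0 : 0 < m) (h : m < p) : ¬ p ∣ m :=
  fun hd => absurd (Nat.le_of_dvd h0 hd) (by omega)

lemma v_one {p : ℕ} (hp : p.Prime) {m : ℕ} (h0 : 0 < m) (hd : p ∣ m) (hlt : m < p * p) :
    padicValNat p m = 1 := by
  haveI : Fact p.Prime := ⟨hp⟩
  have h1 : 1 ≤ padicValNat p m := one_le_padicValNat_of_dvd h0.ne' hd
  have h2 : padicValNat p m < 2 := by
    by_contra hc
    push_neg at hc
    have hdd : p ^ 2 ∣ m := dvd_trans (pow_dvd_pow p hc) pow_padicValNat_dvd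
    have := Nat.le_of_dvd h0 hdd
    rw [pow_two] at this
    omega
  omega

-- chunk R1
lemma fareyTerm_low {p : ℕ} {k : ℕ} (h0 : 0 < k) (hk : k < p) : fareyTerm p k = 0 := by
  apply Finset.sum_eq_zero
  intro h hh
  obtain ⟨hicc, -⟩ := Finset.mem_filter.1 hh
  obtain ⟨h1, h2⟩ := Finset.mem_Icc.1 hicc
  rw [v_not_dvd (not_dvd_of_lt (by omega) (by omega)),
    v_not_dvd (not_dvd_of_lt h0 hk)]
  simp

-- chunk R2
lemma fareyTerm_p {p : ℕ} (hp : p.Prime) : fareyTerm p p = -((p:ℤ) - 1) := by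
  haveI : Fact p.Prime := ⟨hp⟩
  have h2 := hp.two_le
  have hcongr : ∀ h ∈ (Finset.Icc 1 p).filter (fun h => Nat.gcd h p = 1),
      ((padicValNat p h : ℤ) - padicValNat p p) = -1 := by
    intro h hh
    obtain ⟨hicc, hg⟩ := Finset.mem_filter.1 hh
    obtain ⟨h1, hle⟩ := Finset.mem_Icc.1 hicc
    have hne : h ≠ p := by
      rintro rfl
      rw [Nat.gcd_self] at hg
      omega
    rw [v_not_dvd (not_dvd_of_lt (by omega) (by omega)), padicValNat_self]
    simp
  rw [fareyTerm, Finset.sum_congr rfl hcongr, Finset.sum_const, cardA,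
    Nat.totient_prime hp]
  simp only [nsmul_eq_mul, mul_neg, mul_one]
  omega

-- chunk R3
lemma fareyTerm_mid {p : ℕ} (hp : p.Prime) {k : ℕ} (hk1 : p < k) (hk2 : k ≤ 2 * p - 1) :
    fareyTerm p k = 1 := by
  haveI : Fact p.Prime := ⟨hp⟩
  have h2 := hp.two_le
  have hknd : ¬ p ∣ k := by
    intro hd
    rcases hmult (by omega) (by omega) hd with rfl | rfl <;> omega
  have hvk : padicValNat p k = 0 := v_not_dvd hknd
  have hcongr : ∀ h ∈ (Finset.Icc 1 k).filter (fun h => Nat.gcd h k = 1),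
      ((padicValNat p h : ℤ) - padicValNat p k) = if h = p then 1 else 0 := by
    intro h hh
    obtain ⟨hicc, hg⟩ := Finset.mem_filter.1 hh
    obtain ⟨h1, hle⟩ := Finset.mem_Icc.1 hicc
    rw [hvk]
    by_cases hhp : h = p
    · subst hhp; rw [padicValNat_self, if_pos rfl]; simp
    · have hnd : ¬ p ∣ h := by
        intro hd
        rcases hmult (by omega) (by omega) hd with rfl | rfl <;> omega
      rw [v_not_dvd hnd, if_neg hhp]; simp
  rw [fareyTerm, Finset.sum_congr rfl hcongr, Finset.sum_ite_eq']
  rw [if_pos]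
  refine Finset.mem_filter.2 ⟨Finset.mem_Icc.2 ⟨by omega, by omega⟩, ?_⟩
  exact (Nat.Prime.coprime_iff_not_dvd hp).2 hknd

-- chunk R4
lemma fareyTerm_2p {p : ℕ} (hp : p.Prime) (hodd : p ≠ 2) :
    fareyTerm p (2 * p) = -((p:ℤ) - 1) := by
  haveI : Fact p.Prime := ⟨hp⟩
  have h3 : 3 ≤ p := by
    rcases hp.two_le.lt_or_eq with h | h
    · omega
    · omega
  have hv2p : padicValNat p (2 * p) = 1 := by
    refine v_one hp (by omega) ⟨2, by ring⟩ ?_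
    have : 3 * p ≤ p * p := Nat.mul_le_mul_right p h3
    omega
  have hcongr : ∀ h ∈ (Finset.Icc 1 (2*p)).filter (fun h => Nat.gcd h (2*p) = 1),
      ((padicValNat p h : ℤ) - padicValNat p (2*p)) = -1 := by
    intro h hh
    obtain ⟨hicc, hg⟩ := Finset.mem_filter.1 hh
    have hnd : ¬ p ∣ h := by
      intro hd
      have : p ∣ Nat.gcd h (2 * p) := Nat.dvd_gcd hd ⟨2, by ring⟩
      rw [hg] at this
      have := Nat.le_of_dvd one_pos this
      omega
    rw [v_not_dvd hnd, hv2p]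
    simp
  have hcop : Nat.Coprime 2 p := (Nat.coprime_primes Nat.prime_two hp).2 (Ne.symm hodd)
  rw [fareyTerm, Finset.sum_congr rfl hcongr, Finset.sum_const, cardA,
    Nat.totient_mul hcop, Nat.totient_two, Nat.totient_prime hp]
  simp only [nsmul_eq_mul, mul_neg, mul_one, one_mul]
  omega

-- chunk R5
lemma fareyTerm_high {p : ℕ} (hp : p.Prime) (hodd : p ≠ 2) {k : ℕ}
    (hk1 : 2 * p < k) (hk2 : k ≤ 3 * p - 1) :
    fareyTerm p k = 1 + (if k % 2 = 1 then (1:ℤ) else 0) := by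
  haveI : Fact p.Prime := ⟨hp⟩
  have h3 : 3 ≤ p := by rcases hp.two_le.lt_or_eq with h | h <;> omega
  have hppsq : 2 * p < p * p := by
    have : 3 * p ≤ p * p := Nat.mul_le_mul_right p h3
    omega
  have hknd : ¬ p ∣ k := by
    intro hd
    rcases hmult (by omega) (by omega) hd with rfl | rfl <;> omega
  have hvk : padicValNat p k = 0 := v_not_dvd hknd
  have hcongr : ∀ h ∈ (Finset.Icc 1 k).filter (fun h => Nat.gcd h k = 1),
      ((padicValNat p h : ℤ) - padicValNat p k) =
        (if h = p then (1:ℤ) else 0) + (if h = 2 * p then (1:ℤ) else 0) := by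
    intro h hh
    obtain ⟨hicc, hg⟩ := Finset.mem_filter.1 hh
    obtain ⟨h1, hle⟩ := Finset.mem_Icc.1 hicc
    rw [hvk]
    by_cases hhp : h = p
    · subst hhp
      rw [padicValNat_self, if_pos rfl, if_neg (by omega)]
      simp
    · by_cases hh2p : h = 2 * p
      · subst hh2p
        rw [v_one hp (by omega) ⟨2, by ring⟩ hppsq, if_neg hhp, if_pos rfl]
        simp
      · have hnd : ¬ p ∣ h := by
          intro hd
          rcases hmult (by omega) (by omega) hd with rfl | rfl
          · exact hhp rfl
          · exact hh2p rfl
        rw [v_not_dvd hnd, if_neg hhp, if_neg hh2p]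
        simp
  rw [fareyTerm, Finset.sum_congr rfl hcongr, Finset.sum_add_distrib,
    Finset.sum_ite_eq', Finset.sum_ite_eq']
  have hmemp : p ∈ (Finset.Icc 1 k).filter (fun h => Nat.gcd h k = 1) :=
    Finset.mem_filter.2 ⟨Finset.mem_Icc.2 ⟨by omega, by omega⟩,
      (Nat.Prime.coprime_iff_not_dvd hp).2 hknd⟩
  rw [if_pos hmemp]
  congr 1
  by_cases hk2' : k % 2 = 1
  · rw [if_pos hk2', if_pos]
    refine Finset.mem_filter.2 ⟨Finset.mem_Icc.2 ⟨by omega, by omega⟩, ?_⟩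
    have hc2 : Nat.Coprime 2 k := (Nat.Prime.coprime_iff_not_dvd Nat.prime_two).2 (by omega)
    have hcp : Nat.Coprime p k := (Nat.Prime.coprime_iff_not_dvd hp).2 hknd
    exact Nat.Coprime.mul hc2 hcp
  · rw [if_neg hk2', if_neg]
    intro hmem
    obtain ⟨-, hg⟩ := Finset.mem_filter.1 hmem
    have h2k : 2 ∣ k := by omega
    have : 2 ∣ Nat.gcd (2 * p) k := Nat.dvd_gcd ⟨p, rfl⟩ h2k
    rw [hg] at this
    omega

-- low chunk sum
lemma sum_low {p : ℕ} : ∑ k ∈ Finset.Ioc 0 (p - 1), fareyTerm p k = 0 :=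
  Finset.sum_eq_zero fun k hk => by
    obtain ⟨h1, h2⟩ := Finset.mem_Ioc.1 hk
    exact fareyTerm_low h1 (by omega)

lemma singleton_Ioc (a : ℕ) (h : 0 < a) : Finset.Ioc (a - 1) a = {a} := by
  ext x; simp [Finset.mem_Ioc]; omega

theorem ord_recipFareyProd_sign_changes (p : ℕ) (hp : p.Prime) :
    (∃ n : ℕ, 0 < padicValRat p (recipFareyProd n)) ∧
      (∃ m : ℕ, padicValRat p (recipFareyProd m) < 0) := by
  haveI : Fact p.Prime := ⟨hp⟩
  have h2 := hp.two_le
  constructor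
  · -- positive at n = p
    refine ⟨p, ?_⟩
    have hIoc : Finset.Icc 1 p = Finset.Ioc 0 p := by
      ext x; simp [Finset.mem_Icc, Finset.mem_Ioc]; omega
    have hsplit : ∑ k ∈ Finset.Ioc 0 (p-1), fareyTerm p k
        + ∑ k ∈ Finset.Ioc (p-1) p, fareyTerm p k
        = ∑ k ∈ Finset.Ioc 0 p, fareyTerm p k :=
      Finset.sum_Ioc_consecutive _ (by omega) (by omega)
    have hkey : ∑ k ∈ Finset.Icc 1 p, fareyTerm p k = -((p:ℤ) - 1) := by
      rw [hIoc, ← hsplit, sum_low, singleton_Ioc p (by omega), Finset.sum_singleton,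
        fareyTerm_p hp]
      ring
    rw [recipFareyProd, padicValRat.inv, farey_val hp, hkey]
    have : (2:ℤ) ≤ (p:ℤ) := by exact_mod_cast h2
    omega
  · -- negative
    by_cases hodd : p = 2
    · subst hodd
      refine ⟨7, ?_⟩
      haveI : Fact (Nat.Prime 2) := ⟨Nat.prime_two⟩
      have v1 : padicValNat 2 1 = 0 := padicValNat.one
      have v2 : padicValNat 2 2 = 1 := padicValNat_self
      have v3 : padicValNat 2 3 = 0 := padicValNat.eq_zero_of_not_dvd (by norm_num)
      have v4 : padicValNat 2 4 = 2 := by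
        rw [show (4:ℕ) = 2^2 by norm_num, padicValNat.prime_pow]
      have v5 : padicValNat 2 5 = 0 := padicValNat.eq_zero_of_not_dvd (by norm_num)
      have v6 : padicValNat 2 6 = 1 := by
        rw [show (6:ℕ) = 2*3 by norm_num, padicValNat.mul (by norm_num) (by norm_num), v2, v3]
      have v7 : padicValNat 2 7 = 0 := padicValNat.eq_zero_of_not_dvd (by norm_num)
      have f1 : fareyTerm 2 1 = 0 := by
        rw [fareyTerm, show (Finset.Icc 1 1).filter (fun h => Nat.gcd h 1 = 1) = {1} by decide]
        simp [v1]
      have f2 : fareyTerm 2 2 = -1 := by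
        rw [fareyTerm, show (Finset.Icc 1 2).filter (fun h => Nat.gcd h 2 = 1) = {1} by decide]
        simp [v1, v2]
      have f3 : fareyTerm 2 3 = 1 := by
        rw [fareyTerm, show (Finset.Icc 1 3).filter (fun h => Nat.gcd h 3 = 1) = {1,2} by decide]
        simp [v1, v2, v3]
      have f4 : fareyTerm 2 4 = -4 := by
        rw [fareyTerm, show (Finset.Icc 1 4).filter (fun h => Nat.gcd h 4 = 1) = {1,3} by decide]
        simp [v1, v3, v4]
      have f5 : fareyTerm 2 5 = 3 := by
        rw [fareyTerm, show (Finset.Icc 1 5).filter (fun h => Nat.gcd h 5 = 1) = {1,2,3,4} by decide]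
        simp [v1, v2, v3, v4, v5]
      have f6 : fareyTerm 2 6 = -2 := by
        rw [fareyTerm, show (Finset.Icc 1 6).filter (fun h => Nat.gcd h 6 = 1) = {1,5} by decide]
        simp [v1, v5, v6]
      have f7 : fareyTerm 2 7 = 4 := by
        rw [fareyTerm, show (Finset.Icc 1 7).filter (fun h => Nat.gcd h 7 = 1) = {1,2,3,4,5,6} by decide]
        simp [v1, v2, v3, v4, v5, v6, v7]
      have hkey : ∑ k ∈ Finset.Icc 1 7, fareyTerm 2 k = 1 := by
        rw [show Finset.Icc 1 7 = ({1,2,3,4,5,6,7} : Finset ℕ) by decide]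
        rw [show ({1,2,3,4,5,6,7} : Finset ℕ) = {1,2,3,4,5,6,7} from rfl]
        simp [Finset.sum_insert, f1, f2, f3, f4, f5, f6, f7]
      rw [recipFareyProd, padicValRat.inv, farey_val Nat.prime_two, hkey]
      norm_num

    · obtain ⟨t, ht⟩ := hp.odd_of_ne_two hodd
      have ht1 : 1 ≤ t := by omega
      refine ⟨3 * p - 1, ?_⟩
      have hIoc : Finset.Icc 1 (3*p-1) = Finset.Ioc 0 (3*p-1) := by
        ext x; simp [Finset.mem_Icc, Finset.mem_Ioc]; omega
      have hsplit : ∑ k ∈ Finset.Ioc 0 (p-1), fareyTerm p k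
          + ∑ k ∈ Finset.Ioc (p-1) p, fareyTerm p k
          + ∑ k ∈ Finset.Ioc p (2*p-1), fareyTerm p k
          + ∑ k ∈ Finset.Ioc (2*p-1) (2*p), fareyTerm p k
          + ∑ k ∈ Finset.Ioc (2*p) (3*p-1), fareyTerm p k
          = ∑ k ∈ Finset.Ioc 0 (3*p-1), fareyTerm p k := by
        rw [Finset.sum_Ioc_consecutive _ (by omega) (by omega),
          Finset.sum_Ioc_consecutive _ (by omega) (by omega),
          Finset.sum_Ioc_consecutive _ (by omega) (by omega),
          Finset.sum_Ioc_consecutive _ (by omega) (by omega)]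
      have e2 : ∑ k ∈ Finset.Ioc (p-1) p, fareyTerm p k = -((p:ℤ) - 1) := by
        rw [singleton_Ioc p (by omega), Finset.sum_singleton, fareyTerm_p hp]
      have e3 : ∑ k ∈ Finset.Ioc p (2*p-1), fareyTerm p k = (p:ℤ) - 1 := by
        rw [Finset.sum_congr rfl fun k hk => by
            obtain ⟨hk1, hk2⟩ := Finset.mem_Ioc.1 hk
            exact fareyTerm_mid hp hk1 hk2,
          Finset.sum_const, Nat.card_Ioc]
        simp only [nsmul_eq_mul, mul_one]
        omega
      have e4 : ∑ k ∈ Finset.Ioc (2*p-1) (2*p), fareyTerm p k = -((p:ℤ) - 1) := by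
        rw [singleton_Ioc (2*p) (by omega), Finset.sum_singleton, fareyTerm_2p hp hodd]
      have e5 : ∑ k ∈ Finset.Ioc (2*p) (3*p-1), fareyTerm p k = ((p:ℤ) - 1) + t := by
        rw [Finset.sum_congr rfl fun k hk => by
            obtain ⟨hk1, hk2⟩ := Finset.mem_Ioc.1 hk
            exact fareyTerm_high hp hodd hk1 hk2,
          Finset.sum_add_distrib, Finset.sum_const, Nat.card_Ioc,
          show 3*p-1 = 2*p + 2*t by omega, sum_ite_odd]
        simp only [nsmul_eq_mul, mul_one]
        omega
      have hkey : ∑ k ∈ Finset.Icc 1 (3*p-1), fareyTerm p k = (t:ℤ) := by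
        rw [hIoc, ← hsplit, sum_low, e2, e3, e4, e5]
        ring
      rw [recipFareyProd, padicValRat.inv, farey_val hp, hkey]
      have : (1:ℤ) ≤ (t:ℤ) := by exact_mod_cast ht1
      omega
end
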